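/- For all integers m ≥ 1, ℓ ∈ ℤ, and every natural number n, one has ∑_{j=0}^{⌊(m−1)/2⌋} (−1)^j · C(m−1−j, j) · ( A_{n+m−2j}(2, 2m, ℓ, 1) − 2·A_{n+m−1−2j}(2, 2m, ℓ, 1) ) = 0. Equivalently, (N−2)·F_m(N,−1)·A_n(2, 2m, ℓ, 1) = 0 where N is the shift operator N·A_n = A_{n+1} and F denotes the Fibonacci polynomials. -/

import Mathlib

/-!
Write `a_n(l) = A_n(2, 2m, l, 1)`. Pascal's rule gives `a_{n+1}(l) = a_n(l+1) + a_n(l-1)`, so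
`n ↦ n + 1` acts on `l ↦ a_n(l)` as `T = σ + σ⁻¹`, where `σ` is the shift in `l`. The Fibonacci
polynomial `F_m(x, -1)` is the Chebyshev polynomial `S_{m-1}(x)`, and `S_{m-1}(σ + σ⁻¹)` is
`∑_{i<m} σ^{m-1-2i}`. Hence `((T - 2) F_m(T) a_n)(l) = P(l+m) + P(l+m-2) - 2 P(l+m-1)` with
`P(c) = ∑_{i<m} a_n(c - 2i)`. As `a_n` is `2m`-periodic and invariant under `l ↦ 1 - l`, the sum `P`
is constant, so this vanishes.
-/

/-- Binomial coefficient `C(a, r)` with integer lower index, equal to `0` for `r < 0`. -/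
noncomputable def Cz (a : ℕ) (r : ℤ) : ℝ :=
  if 0 ≤ r then (a.choose r.toNat : ℝ) else 0

/-- `A n (k, m, ℓ, z) = ∑_{h ∈ ℤ} C(n, ⌊(n + m h + ℓ)/k⌋) z^h`. -/
noncomputable def A (k m : ℕ) (l : ℤ) (z : ℝ) (n : ℕ) : ℝ :=
  ∑ᶠ h : ℤ, Cz n (((n : ℤ) + m * h + l).fdiv k) * z ^ h

open Function Polynomial Finset

namespace Polynomial.Chebyshev

variable (R : Type*) [CommRing R]

theorem S_eq_sum_range_succ (n : ℕ) :
    S R n = ∑ j ∈ range (n + 1), (-1) ^ j * ((n - j).choose j : R[X]) * X ^ (n - 2 * j) := by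
  let t (k j : ℕ) : R[X] := (-1) ^ j * ((k - j).choose j : R[X]) * X ^ (k - 2 * j)
  have t_succ_succ (n j : ℕ) : t (n + 2) (j + 1) = X * t (n + 1) (j + 1) - t n j := by
    simp only [t]
    rcases le_or_gt (2 * j + 1) n with h | h
    · rw [show n + 2 - (j + 1) = n - j + 1 by omega, Nat.choose_succ_succ',
        show n + 1 - (j + 1) = n - j by omega, show n - 2 * j = n + 1 - 2 * (j + 1) + 1 by omega,
        show n + 2 - 2 * (j + 1) = n + 1 - 2 * (j + 1) + 1 by omega]
      push_cast; ring
    rw [Nat.choose_eq_zero_of_lt (n := n + 1 - (j + 1)) (by omega)]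
    rcases le_or_gt j n with h' | h'
    · rw [show n + 2 - (j + 1) = n - j + 1 by omega, Nat.choose_succ_succ',
        Nat.choose_eq_zero_of_lt (n := n - j) (k := j + 1) (by omega),
        show n + 2 - 2 * (j + 1) = n - 2 * j by omega]
      push_cast; ring
    rw [Nat.choose_eq_zero_of_lt (n := n + 2 - (j + 1)) (by omega),
      Nat.choose_eq_zero_of_lt (n := n - j) (by omega)]
    simp
  suffices ∀ n : ℕ, S R n = ∑ j ∈ range (n + 1), t n j from this n
  intro n
  induction n using Nat.twoStepInduction with
  | zero => simp [t]
  | one => simp [t, sum_range_succ]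
  | more n ih₀ ih₁ =>
    have top : t (n + 2) (n + 2) = 0 := by simp [t]
    calc S R ((n + 2 : ℕ) : ℤ) = X * S R ((n + 1 : ℕ) : ℤ) - S R (n : ℤ) := by
          rw [show ((n + 2 : ℕ) : ℤ) = n + 2 by push_cast; ring, S_add_two]; push_cast; rfl
      _ = X * (∑ j ∈ range (n + 1), t (n + 1) (j + 1) + t (n + 1) 0) -
            ∑ j ∈ range (n + 1), t n j := by
          rw [ih₁, ih₀, sum_range_succ']
      _ = ∑ j ∈ range (n + 1), t (n + 2) (j + 1) + t (n + 2) 0 := by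
          simp only [t_succ_succ, sum_sub_distrib, ← mul_sum]
          simp [t, pow_succ]; ring
      _ = ∑ j ∈ range (n + 2 + 1), t (n + 2) j := by
          rw [sum_range_succ' _ (n + 2), sum_range_succ (fun j => t (n + 2) (j + 1)) (n + 1), top,
            add_zero]

theorem S_eq_sum_range (n : ℕ) :
    S R n = ∑ j ∈ range (n / 2 + 1), ((-1) ^ j * (n - j).choose j : R) • X ^ (n - 2 * j) := by
  rw [S_eq_sum_range_succ]
  refine (sum_subset (range_subset_range.2 (by omega)) fun j hj hj' => ?_).symm.trans
    (sum_congr rfl fun j _ => by rw [smul_eq_C_mul]; simp)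
  simp only [mem_range] at hj hj'
  rw [Nat.choose_eq_zero_of_lt (by omega), Nat.cast_zero, mul_zero, zero_mul]

end Polynomial.Chebyshev

section NeighborSum

variable (R M : Type*) [CommRing R] [AddCommGroup M] [Module R M]

def neighborSum : Module.End R (ℤ → M) :=
  LinearMap.funLeft R M (· + 1) + LinearMap.funLeft R M (· - 1)

variable {R M}

@[simp]
theorem neighborSum_apply (f : ℤ → M) (l : ℤ) : neighborSum R M f l = f (l + 1) + f (l - 1) :=
  rfl

theorem aeval_neighborSum_S_apply (n : ℕ) (f : ℤ → M) (l : ℤ) :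
    aeval (neighborSum R M) (Chebyshev.S R n) f l = ∑ i ∈ range (n + 1), f (l + n - 2 * i) := by
  induction n using Nat.twoStepInduction generalizing l with
  | zero => simp
  | one => simp [sum_range_succ, add_sub_right_comm]; ring_nf
  | more n ih₀ ih₁ =>
    rw [show ((n + 2 : ℕ) : ℤ) = n + 2 by push_cast; ring, Chebyshev.S_add_two]
    simp only [map_sub, map_mul, aeval_X, LinearMap.sub_apply, Module.End.mul_apply, Pi.sub_apply,
      neighborSum_apply]
    push_cast at ih₁
    rw [ih₁, ih₁, ih₀, sum_range_succ _ (n + 2),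
      sum_range_succ (fun i : ℕ => f (l - 1 + (n + 1) - 2 * i))]
    have h1 : ∀ i : ℕ, l + 1 + (n + 1) - 2 * i = l + (n + 2) - 2 * i := fun i => by ring
    have h2 : ∀ i : ℕ, l - 1 + (n + 1) - 2 * i = l + n - 2 * i := fun i => by ring
    have h3 : l + (n + 2) - 2 * ((n + 2 : ℕ) : ℤ) = l + n - 2 * ((n + 1 : ℕ) : ℤ) := by
      push_cast; ring
    simp only [h1, h2, h3]
    abel

theorem periodic_sum_range_sub_two_mul {g : ℤ → M} {m : ℕ} (hg : Periodic g (2 * m)) :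
    Periodic (fun c => ∑ i ∈ range m, g (c - 2 * i)) 2 := by
  intro c
  dsimp only
  have wrap : g (c + 2 - 2 * m) = g (c + 2) := by simpa using (hg (c + 2 - 2 * m)).symm
  have shift := sum_range_succ' (fun i : ℕ => g (c + 2 - 2 * i)) m
  rw [sum_range_succ, wrap] at shift
  simp only [Nat.cast_zero, mul_zero, sub_zero, Nat.cast_succ, add_left_inj] at shift
  rw [shift]
  exact sum_congr rfl fun i _ => by ring_nf

theorem periodic_one_sum_range_sub_two_mul {g : ℤ → M} {m : ℕ}
    (hg : Periodic g (2 * m)) (hsymm : ∀ x, g (1 - x) = g x) :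
    Periodic (fun c => ∑ i ∈ range m, g (c - 2 * i)) 1 := by
  intro c
  calc ∑ i ∈ range m, g (c + 1 - 2 * i) = ∑ i ∈ range m, g (-c + 2 * i) :=
        sum_congr rfl fun i _ => by rw [← hsymm]; ring_nf
    _ = ∑ i ∈ range m, g (-c + 2 * (m - 1 - i : ℕ)) := (sum_range_reflect _ m).symm
    _ = ∑ i ∈ range m, g (c + (m - 1 - c) * 2 - 2 * i) := sum_congr rfl fun i hi => by
        rw [Nat.cast_sub (by simp at hi; omega), Nat.cast_sub (by simp at hi; omega)]
        push_cast; ring_nf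
    _ = ∑ i ∈ range m, g (c - 2 * i) := (periodic_sum_range_sub_two_mul hg).int_mul _ c

theorem aeval_neighborSum_X_sub_two_mul_S {g : ℤ → M} {n : ℕ}
    (hg : Periodic g (2 * (n + 1 : ℕ))) (hsymm : ∀ x, g (1 - x) = g x) :
    aeval (neighborSum R M) ((X - 2) * Chebyshev.S R n) g = 0 := by
  have hconst := periodic_one_sum_range_sub_two_mul hg hsymm
  have hP : ∀ c, ∑ i ∈ range (n + 1), g (c - 2 * i) = ∑ i ∈ range (n + 1), g (-2 * i) := fun c => by
    simpa using hconst.int_mul_eq c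
  ext l
  simp only [map_mul, map_sub, aeval_X, map_ofNat, Module.End.mul_apply, LinearMap.sub_apply,
    neighborSum_apply, aeval_neighborSum_S_apply, Pi.sub_apply, Module.End.ofNat_apply,
    Pi.smul_apply, Pi.zero_apply]
  rw [hP, hP, hP, two_smul, sub_self]

end NeighborSum

theorem Cz_succ (n : ℕ) (r : ℤ) : Cz (n + 1) r = Cz n r + Cz n (r - 1) := by
  unfold Cz
  rcases lt_trichotomy r 0 with h | rfl | h
  · rw [if_neg (by omega), if_neg (by omega), if_neg (by omega), add_zero]
  · simp
  · obtain ⟨k, hk⟩ : ∃ k : ℕ, r.toNat = k + 1 := ⟨r.toNat - 1, by omega⟩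
    rw [if_pos h.le, if_pos h.le, if_pos (by omega), hk, show (r - 1).toNat = k by omega,
      Nat.choose_succ_succ', Nat.cast_add, add_comm]

theorem Cz_symm (n : ℕ) (r : ℤ) : Cz n r = Cz n (n - r) := by
  unfold Cz
  by_cases h : 0 ≤ r ∧ r ≤ n
  · rw [if_pos h.1, if_pos (by omega), show ((n : ℤ) - r).toNat = n - r.toNat by omega,
      Nat.choose_symm (by omega)]
  · rcases not_and_or.1 h with h | h
    · rw [if_neg h, if_pos (by omega), Nat.choose_eq_zero_of_lt (by omega), Nat.cast_zero]
    · rw [if_pos (by omega), if_neg (by omega), Nat.choose_eq_zero_of_lt (by omega), Nat.cast_zero]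

theorem mem_Icc_of_Cz_ne_zero {n : ℕ} {r : ℤ} (h : Cz n r ≠ 0) : r ∈ Set.Icc 0 (n : ℤ) := by
  unfold Cz at h
  split_ifs at h with hr
  · refine ⟨hr, ?_⟩
    by_contra hn
    exact h (by rw [Nat.choose_eq_zero_of_lt (by omega), Nat.cast_zero])
  · exact absurd rfl h

theorem finite_support_Cz_fdiv_two (n M : ℕ) (hM : M ≠ 0) (l : ℤ) :
    (support fun h : ℤ => Cz n (((n : ℤ) + M * h + l).fdiv 2)).Finite := by
  have hinj : Injective fun h : ℤ => (n : ℤ) + M * h + l := fun a b hab => by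
    simpa [hM] using hab
  refine ((Set.finite_Icc 0 (2 * n + 1 : ℤ)).preimage hinj.injOn).subset fun h hh => ?_
  have := mem_Icc_of_Cz_ne_zero hh
  rw [Int.fdiv_eq_ediv_of_nonneg _ zero_le_two, Set.mem_Icc] at this
  simp only [Set.mem_preimage, Set.mem_Icc]
  omega

theorem A_two_succ (M : ℕ) (hM : M ≠ 0) (l : ℤ) (z : ℝ) (n : ℕ) :
    A 2 M l z (n + 1) = A 2 M (l + 1) z n + A 2 M (l - 1) z n := by
  simp only [A, Nat.cast_ofNat]
  have hfin (l' : ℤ) : (support fun h : ℤ => Cz n (((n : ℤ) + M * h + l').fdiv 2) * z ^ h).Finite :=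
    (finite_support_Cz_fdiv_two n M hM l').subset (support_mul_subset_left _ _)
  rw [← finsum_add_distrib (hfin _) (hfin _)]
  refine finsum_congr fun h => ?_
  rw [← add_mul, Cz_succ]
  simp only [Int.fdiv_eq_ediv_of_nonneg _ (zero_le_two : (0 : ℤ) ≤ 2)]
  congr 4 <;> push_cast <;> omega

theorem A_periodic (k M n : ℕ) : Periodic (fun l => A k M l 1 n) M := fun l => by
  simp only [A, one_zpow, mul_one]
  rw [← finsum_comp_equiv (Equiv.subRight (1 : ℤ))]
  exact finsum_congr fun h => by simp only [Equiv.subRight_apply]; ring_nf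

theorem A_two_one_sub (M : ℕ) (l : ℤ) (n : ℕ) : A 2 M (1 - l) 1 n = A 2 M l 1 n := by
  simp only [A, one_zpow, mul_one]
  rw [← finsum_comp_equiv (Equiv.neg ℤ)]
  refine finsum_congr fun h => ?_
  rw [Cz_symm, Equiv.neg_apply]
  simp only [Nat.cast_ofNat, Int.fdiv_eq_ediv_of_nonneg _ (zero_le_two : (0 : ℤ) ≤ 2)]
  congr 1
  rw [mul_neg]
  omega

theorem neighborSum_pow_A_two (M : ℕ) (hM : M ≠ 0) (z : ℝ) (n k : ℕ) :
    (neighborSum ℝ ℝ ^ k) (fun l => A 2 M l z n) = fun l => A 2 M l z (n + k) := by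
  induction k with
  | zero => rfl
  | succ k ih =>
    ext l
    rw [pow_succ', Module.End.mul_apply, ih, neighborSum_apply, ← add_assoc, A_two_succ M hM]

theorem stmt14 (m : ℕ) (hm : 1 ≤ m) (l : ℤ) (n : ℕ) :
    ∑ j ∈ Finset.range ((m - 1) / 2 + 1), (-1 : ℝ) ^ j * ((m - 1 - j).choose j : ℝ) *
        (A 2 (2 * m) l 1 (n + m - 2 * j) - 2 * A 2 (2 * m) l 1 (n + m - 1 - 2 * j)) = 0 := by
  obtain ⟨k, rfl⟩ : ∃ k, m = k + 1 := ⟨m - 1, by omega⟩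
  set g : ℤ → ℝ := fun l => A 2 (2 * (k + 1)) l 1 n
  have hM : 2 * (k + 1) ≠ 0 := by omega
  calc _ = ∑ j ∈ range (k / 2 + 1), ((-1) ^ j * (k - j).choose j : ℝ) *
          ((neighborSum ℝ ℝ ^ (k - 2 * j + 1)) g l - 2 * (neighborSum ℝ ℝ ^ (k - 2 * j)) g l) := by
        refine sum_congr (by simp) fun j hj => ?_
        simp only [mem_range] at hj
        rw [neighborSum_pow_A_two _ hM, neighborSum_pow_A_two _ hM, Nat.add_sub_cancel,
          show n + (k + 1) - 2 * j = n + (k - 2 * j + 1) by omega,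
          show n + (k + 1) - 1 - 2 * j = n + (k - 2 * j) by omega]
    _ = aeval (neighborSum ℝ ℝ) ((X - 2) * Chebyshev.S ℝ k) g l := by
        simp [Chebyshev.S_eq_sum_range, mul_sum, LinearMap.sum_apply, sub_mul, pow_succ', mul_sub,
          map_ofNat]
    _ = 0 := congr_fun (aeval_neighborSum_X_sub_two_mul_S (A_periodic 2 (2 * (k + 1)) n)
        (A_two_one_sub (2 * (k + 1)) · n)) l
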